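/- Let A be a skew left brace with λ_a(b) = a⁻¹(a∘b) and ρ_b(a) = (λ_a(b))'∘a∘b. Then the map r: A × A → A × A defined by r(a,b) = (λ_a(b), ρ_b(a)) is a set-theoretic solution of the braid equation: (r×id)(id×r)(r×id) = (id×r)(r×id)(id×r) as maps A³ → A³. -/
import Mathlib


structure SkewLeftBrace (A : Type*) [Group A] where
  circ : A → A → A
  one' : A
  inv' : A → A
  circ_assoc : ∀ a b c : A, circ (circ a b) c = circ a (circ b c)
  one'_circ : ∀ a : A, circ one' a = a
  circ_one' : ∀ a : A, circ a one' = a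
  inv'_circ : ∀ a : A, circ (inv' a) a = one'
  circ_inv' : ∀ a : A, circ a (inv' a) = one'
  compat : ∀ a b c : A, circ a (b * c) = circ a b * a⁻¹ * circ a c

namespace SkewLeftBrace

variable {A : Type*} [Group A] (B : SkewLeftBrace A)

lemma left_inv_unique {x z : A} (h : B.circ z x = B.one') : z = B.inv' x := by
  have h2 : B.circ (B.circ z x) (B.inv' x) = B.circ B.one' (B.inv' x) := by rw [h]
  rwa [B.circ_assoc, B.circ_inv', B.circ_one', B.one'_circ] at h2

lemma inv'_inv' (x : A) : B.inv' (B.inv' x) = x :=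
  (B.left_inv_unique (B.circ_inv' x)).symm

lemma inv'_circ_eq (x y : A) : B.inv' (B.circ x y) = B.circ (B.inv' y) (B.inv' x) := by
  refine (B.left_inv_unique ?_).symm
  rw [B.circ_assoc, ← B.circ_assoc (B.inv' x), B.inv'_circ, B.one'_circ, B.inv'_circ]

lemma cancel₁ (x y : A) : B.circ x (B.circ (B.inv' x) y) = y := by
  rw [← B.circ_assoc, B.circ_inv', B.one'_circ]

lemma cancel₂ (x y : A) : B.circ (B.inv' x) (B.circ x y) = y := by
  rw [← B.circ_assoc, B.inv'_circ, B.one'_circ]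

lemma circ_one (a : A) : B.circ a 1 = a := by
  have h := B.compat a 1 1
  rw [mul_one] at h
  have h2 : B.circ a 1 * 1 = B.circ a 1 * (a⁻¹ * B.circ a 1) := by
    rw [mul_one, ← mul_assoc]; exact h
  have h3 : (1 : A) = a⁻¹ * B.circ a 1 := mul_left_cancel h2
  have h4 : a * (1 : A) = a * (a⁻¹ * B.circ a 1) := by rw [← h3]
  rw [mul_one, ← mul_assoc, mul_inv_cancel, one_mul] at h4
  exact h4.symm

lemma one'_eq_one : B.one' = 1 := by
  have h1 := B.circ_one B.one'
  have h2 := B.one'_circ 1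
  rw [h2] at h1; exact h1.symm

lemma circ_inv (a b : A) : B.circ a b⁻¹ = a * (B.circ a b)⁻¹ * a := by
  have h := B.compat a b b⁻¹
  rw [mul_inv_cancel, B.circ_one] at h
  have h2 : B.circ a b⁻¹ = (B.circ a b * a⁻¹)⁻¹ * a :=
    eq_inv_mul_iff_mul_eq.mpr h.symm
  rw [h2, mul_inv_rev, inv_inv]

end SkewLeftBrace

/-- `r(a,b) = (λ_a(b), ρ_b(a))` is a set-theoretic solution of the braid equation:
`(r×id)(id×r)(r×id) = (id×r)(r×id)(id×r)` as maps `A³ → A³`. -/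
theorem skewLeftBrace_braid_solution {A : Type*} [Group A] (B : SkewLeftBrace A)
    (lam rho : A → A → A) (hlam : ∀ a b, lam a b = a⁻¹ * B.circ a b)
    (hrho : ∀ a b, rho b a = B.circ (B.circ (B.inv' (lam a b)) a) b)
    (r : A × A → A × A) (hr : ∀ a b, r (a, b) = (lam a b, rho b a))
    (r₁₂ r₂₃ : A × A × A → A × A × A)
    (hr12 : ∀ a b c : A, r₁₂ (a, b, c) = ((r (a, b)).1, (r (a, b)).2, c))
    (hr23 : ∀ a b c : A, r₂₃ (a, b, c) = (a, r (b, c))) :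
    r₁₂ ∘ r₂₃ ∘ r₁₂ = r₂₃ ∘ r₁₂ ∘ r₂₃ := by
  -- circ in terms of lam
  have hC : ∀ x y, B.circ x y = x * lam x y := by
    intro x y; rw [hlam, ← mul_assoc, mul_inv_cancel, one_mul]
  -- λ is a morphism: λ_{x∘y} = λ_x λ_y
  have lam_comp : ∀ x y z, lam (B.circ x y) z = lam x (lam y z) := by
    intro x y z
    calc lam (B.circ x y) z = (B.circ x y)⁻¹ * B.circ (B.circ x y) z := hlam _ _
      _ = (B.circ x y)⁻¹ * B.circ x (B.circ y z) := by rw [B.circ_assoc]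
      _ = x⁻¹ * (B.circ x y⁻¹ * x⁻¹ * B.circ x (B.circ y z)) := by
            rw [B.circ_inv]; group
      _ = x⁻¹ * B.circ x (y⁻¹ * B.circ y z) := by rw [B.compat]
      _ = lam x (lam y z) := by rw [← hlam, ← hlam]
  -- key: λ_a(b) ∘ ρ_b(a) = a ∘ b
  have key1 : ∀ a b, B.circ (lam a b) (rho b a) = B.circ a b := by
    intro a b
    rw [hrho, ← B.circ_assoc, ← B.circ_assoc, B.circ_inv', B.one'_circ]
  -- first component equation
  have eq1 : ∀ a b c, lam (lam a b) (lam (rho b a) c) = lam a (lam b c) := by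
    intro a b c
    rw [← lam_comp, key1, lam_comp]
  -- compat against the inv' of t
  have hIt : ∀ t x, B.circ (B.inv' t) (x * t) =
      B.circ (B.inv' t) x * (B.inv' t)⁻¹ := by
    intro t x
    rw [B.compat, B.inv'_circ, B.one'_eq_one, mul_one]
  -- second component equation
  have eq2 : ∀ a b c, rho (lam (rho b a) c) (lam a b)
      = lam (rho (lam b c) a) (rho c b) := by
    intro a b c
    set u := lam a b with hu
    set w := lam b c with hw
    set t := lam a w with ht
    set s := lam (rho b a) c with hs
    have hus : lam u s = t := by rw [hs, ht, hw, hu]; exact eq1 a b c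
    -- LHS
    have hL : rho s u = B.circ (B.inv' t) u * (B.inv' t)⁻¹ := by
      rw [hrho u s, hus, B.circ_assoc, hC u s, hus, hIt]
    -- p := ρ_w(a)
    have hp : rho w a = B.circ (B.inv' t) a * (B.inv' t)⁻¹ := by
      rw [hrho a w, ← ht, B.circ_assoc, hC a w, ← ht, hIt]
    -- p ∘ q
    have hpq : B.circ (rho w a) (rho c b)
        = B.circ (B.inv' t) (a * (u * t)) := by
      rw [hrho a w, ← ht, hrho b c, ← hw]
      simp only [B.circ_assoc, B.cancel₁, B.cancel₂]
      congr 1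
      rw [hC b c, ← hw, B.compat, hC a b, ← hu, hC a w, ← ht]
      group
    rw [hL, hlam, hpq, hp]
    rw [B.compat (B.inv' t) a (u * t), hIt]
    group
  -- third component equation
  have eq3 : ∀ a b c, rho c (rho b a)
      = rho (rho c b) (rho (lam b c) a) := by
    intro a b c
    set u := lam a b with hu
    set w := lam b c with hw
    set t := lam a w with ht
    set s := lam (rho b a) c with hs
    have hus : lam u s = t := by rw [hs, ht, hw, hu]; exact eq1 a b c
    have hX : lam (rho w a) (rho c b) = B.circ (B.circ (B.inv' t) u) s := by
      have h2 := eq2 a b c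
      rw [← hu, ← hw, ← hs] at h2
      rw [← h2, hrho u s, hus]
    calc rho c (rho b a)
        = B.circ (B.circ (B.inv' s) (rho b a)) c := by
          rw [hs]; exact hrho _ _
      _ = B.circ (B.circ (B.inv' s) (B.circ (B.circ (B.inv' u) a) b)) c := by
          rw [hrho a b, ← hu]
      _ = B.circ (B.circ (B.inv' (lam (rho w a) (rho c b))) (rho w a)) (rho c b) := by
          rw [hX, B.inv'_circ_eq, B.inv'_circ_eq, B.inv'_inv',
            hrho a w, ← ht, hrho b c, ← hw]
          simp only [B.circ_assoc, B.cancel₁, B.cancel₂]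
      _ = rho (rho c b) (rho w a) := (hrho _ _).symm
  -- assemble
  funext x
  obtain ⟨a, b, c⟩ := x
  simp only [Function.comp_apply, hr12, hr23, hr]
  exact Prod.ext (eq1 a b c) (Prod.ext (eq2 a b c) (eq3 a b c))
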